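/- Suppose d-independence is a stationary independence relation compatible with cl^d on M, M is monodimensional, and g ∈ Aut(M) is bounded. Then there exists E ∈ X such that g(B) = B (setwise) for every B ∈ X containing E. -/
import Mathlib


/-! Framework: an integer-valued dimension function on a countable structure `M`,
with automorphism group modelled by a group `G` acting on `M`. -/

/-- An invariant, nonnegative, monotone, submodular integer-valued dimension
function on the finite subsets of `M`, normalised by `d ∅ = 0`. -/
structure DimFn (M G : Type*) [DecidableEq M] [Group G] [MulAction G M] where
  d : Finset M → ℤ
  invariant : ∀ (g : G) (X : Finset M), d (X.image (fun x => g • x)) = d X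
  nonneg : ∀ X : Finset M, 0 ≤ d X
  mono : ∀ ⦃X Y : Finset M⦄, X ⊆ Y → d X ≤ d Y
  submodular : ∀ X Y : Finset M, d (X ∪ Y) ≤ d X + d Y - d (X ∩ Y)
  d_empty : d ∅ = 0

/-- `g` fixes the set `A` pointwise. -/
def Fixes {M : Type*} (G : Type*) [Group G] [MulAction G M] (g : G) (A : Set M) : Prop :=
  ∀ a ∈ A, g • a = a

/-- The orbit of `a` under the pointwise stabiliser `Aut(M/A)` of `A` in `G`. -/
def orbOver {M : Type*} (G : Type*) [Group G] [MulAction G M] (a : M) (A : Set M) : Set M :=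
  {b : M | ∃ g : G, Fixes G g A ∧ g • a = b}

namespace DimFn

variable {M G : Type*} [DecidableEq M] [Group G] [MulAction G M] (D : DimFn M G)

/-- Relative dimension `d(X/Z)` of a finite set over an arbitrary set:
the infimum of `d(X ∪ Y) - d(Y)` over finite `Y ⊆ Z`. -/
noncomputable def drel (X : Finset M) (Z : Set M) : ℤ :=
  sInf {k : ℤ | ∃ Y : Finset M, ↑Y ⊆ Z ∧ k = D.d (X ∪ Y) - D.d Y}

/-- The `d`-closure `cl^d(Z) = {a : d(a/Z) = 0}`. -/
noncomputable def cld (Z : Set M) : Set M := {a : M | D.drel {a} Z = 0}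

/-- Membership in the family `𝒳` of `d`-closures of finite subsets of `M`. -/
def IsClX (A : Set M) : Prop := ∃ X : Finset M, A = D.cld ↑X

/-- `d`-independence `X ⫝^d_B C` of a finite tuple `X` from `C` over `B`. -/
noncomputable def IndepF (X : Finset M) (B C : Set M) : Prop :=
  D.drel X (B ∪ C) = D.drel X B

/-- `d`-independence `A ⫝^d_B C` for sets. -/
def Indep (A B C : Set M) : Prop := ∀ X : Finset M, ↑X ⊆ A → D.IndepF X B C

/-- `cl^d` subsumes definable closure: any element fixed by every automorphism
fixing `cl^d(X)` pointwise lies in `cl^d(X)`. -/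
def SubsumesDcl : Prop :=
  ∀ (X : Finset M) (a : M),
    (∀ g : G, Fixes G g (D.cld ↑X) → g • a = a) → a ∈ D.cld ↑X

/-- Invariance of `⫝^d` under the group action. -/
def InvarianceP : Prop :=
  ∀ (g : G) (A B C : Set M), D.Indep A B C →
    D.Indep ((fun x => g • x) '' A) ((fun x => g • x) '' B) ((fun x => g • x) '' C)

/-- Monotonicity of `⫝^d`. -/
def MonotonicityP : Prop :=
  ∀ A B C C' : Set M, D.Indep A B (C ∪ C') → D.Indep A B C ∧ D.Indep A (B ∪ C) C'

/-- Transitivity of `⫝^d`. -/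
def TransitivityP : Prop :=
  ∀ A B C C' : Set M, D.Indep A B C → D.Indep A (B ∪ C) C' → D.Indep A B (C ∪ C')

/-- Symmetry of `⫝^d`. -/
def SymmetryP : Prop := ∀ A B C : Set M, D.Indep A B C → D.Indep C B A

/-- Compatibility of `⫝^d` with the closure `cl^d`:
`a ⫝_b C ↔ a ⫝_{cl(b)} C` and `a ⫝_B C ↔ cl(a,B) ⫝_B C`. -/
def CompatibilityP : Prop :=
  (∀ (X b : Finset M) (C : Set M), D.IndepF X ↑b C ↔ D.IndepF X (D.cld ↑b) C) ∧
  (∀ (X : Finset M) (B C : Set M), D.IndepF X B C ↔ D.Indep (D.cld (↑X ∪ B)) B C)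

/-- Existence for `⫝^d`: any `A ∈ 𝒳` can be moved by an automorphism fixing `B`
pointwise to be independent from `C` over `B`. -/
def ExistenceP : Prop :=
  ∀ A B C : Set M, D.IsClX A → D.IsClX B → D.IsClX C →
    ∃ g : G, Fixes G g B ∧ D.Indep ((fun x => g • x) '' A) B C

/-- Stationarity for `⫝^d`: if `A₁, A₂ ∈ 𝒳` contain `B`, are independent from
`C` over `B`, and a partial automorphism (the restriction of some `g ∈ G`)
maps `A₁` onto `A₂` fixing `B` pointwise, then it extends (together with the
identity on `C`) to an automorphism. -/
def StationarityP : Prop :=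
  ∀ A₁ A₂ B C : Set M, D.IsClX A₁ → D.IsClX A₂ → D.IsClX B → D.IsClX C →
    B ⊆ A₁ → B ⊆ A₂ → D.Indep A₁ B C → D.Indep A₂ B C →
    ∀ g : G, Fixes G g B → (fun x => g • x) '' A₁ = A₂ →
      ∃ k : G, (∀ x ∈ A₁, k • x = g • x) ∧ Fixes G k C

/-- `b` is basic over `A ∈ 𝒳`. -/
noncomputable def IsBasic (b : M) (A : Set M) : Prop :=
  b ∉ A ∧ ∀ C : Set M, D.IsClX C → A ⊆ C → D.drel {b} C < D.drel {b} A → b ∈ C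

/-- `S` is a basic `Aut(M/A)`-orbit. -/
noncomputable def IsBasicOrbit (S A : Set M) : Prop :=
  ∃ b : M, D.IsBasic b A ∧ S = orbOver G b A

/-- `M` is monodimensional: for every `A ∈ 𝒳` and basic `Aut(M/A)`-orbit `S`
there is `A ⊆ B ∈ 𝒳` with `M = cl^d(B ∪ S)`. -/
noncomputable def Monodimensional : Prop :=
  ∀ A S : Set M, D.IsClX A → D.IsBasicOrbit S A →
    ∃ B : Set M, D.IsClX B ∧ A ⊆ B ∧ D.cld (B ∪ S) = Set.univ

/-- `g` is bounded over `A ∈ 𝒳`: there are `A ⊆ C ∈ 𝒳` and `b` basic over `C`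
such that every `b'` in the `Aut(M/C)`-orbit of `b` lies in `cl^d(C ∪ {g b'})`. -/
noncomputable def BoundedOver (g : G) (A : Set M) : Prop :=
  ∃ C : Set M, D.IsClX C ∧ A ⊆ C ∧
    ∃ b : M, D.IsBasic b C ∧ ∀ b' ∈ orbOver G b C, b' ∈ D.cld (C ∪ {g • b'})

/-- `g` is bounded: bounded over some `A ∈ 𝒳`. -/
noncomputable def Bounded (g : G) : Prop :=
  ∃ A : Set M, D.IsClX A ∧ D.BoundedOver g A

/-- `g` is `cl^d`-bounded: some `E ∈ 𝒳` is such that `g` stabilises setwise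
every `B ∈ 𝒳` containing `E`. -/
noncomputable def ClDBounded (g : G) : Prop :=
  ∃ E : Set M, D.IsClX E ∧
    ∀ B : Set M, D.IsClX B → E ⊆ B → (fun x => g • x) '' B = B

end DimFn


namespace DimFn
variable {M G : Type*} [DecidableEq M] [Group G] [MulAction G M] (D : DimFn M G)

lemma wset_nonempty (X : Finset M) (Z : Set M) :
    {k : ℤ | ∃ Y : Finset M, ↑Y ⊆ Z ∧ k = D.d (X ∪ Y) - D.d Y}.Nonempty :=
  ⟨D.d X - D.d ∅, ∅, by simp⟩

lemma wset_bdd (X : Finset M) (Z : Set M) :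
    BddBelow {k : ℤ | ∃ Y : Finset M, ↑Y ⊆ Z ∧ k = D.d (X ∪ Y) - D.d Y} := by
  refine ⟨0, ?_⟩
  rintro k ⟨Y, hY, rfl⟩
  have := D.mono (Finset.subset_union_right (s₁ := X) (s₂ := Y))
  omega

lemma drel_le {X Y : Finset M} {Z : Set M} (hY : ↑Y ⊆ Z) :
    D.drel X Z ≤ D.d (X ∪ Y) - D.d Y :=
  csInf_le (D.wset_bdd X Z) ⟨Y, hY, rfl⟩

lemma drel_nonneg (X : Finset M) (Z : Set M) : 0 ≤ D.drel X Z := by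
  refine le_csInf (D.wset_nonempty X Z) ?_
  rintro k ⟨Y, hY, rfl⟩
  have := D.mono (Finset.subset_union_right (s₁ := X) (s₂ := Y))
  omega

lemma drel_witness (X : Finset M) (Z : Set M) :
    ∃ Y : Finset M, ↑Y ⊆ Z ∧ D.drel X Z = D.d (X ∪ Y) - D.d Y :=
  Int.csInf_mem (D.wset_nonempty X Z) (D.wset_bdd X Z)

lemma f_anti (X : Finset M) {Y Y' : Finset M} (h : Y ⊆ Y') :
    D.d (X ∪ Y') - D.d Y' ≤ D.d (X ∪ Y) - D.d Y := by
  have h1 := D.submodular (X ∪ Y) Y'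
  have h2 : (X ∪ Y) ∪ Y' = X ∪ Y' := by
    rw [Finset.union_assoc, Finset.union_eq_right.2 h]
  have h3 : D.d Y ≤ D.d ((X ∪ Y) ∩ Y') :=
    D.mono (Finset.subset_inter Finset.subset_union_right h)
  rw [h2] at h1
  omega

lemma drel_anti (X : Finset M) {Z Z' : Set M} (h : Z ⊆ Z') : D.drel X Z' ≤ D.drel X Z := by
  refine le_csInf (D.wset_nonempty X Z) ?_
  rintro k ⟨Y, hY, rfl⟩
  exact D.drel_le (hY.trans h)

lemma drel_union (X X' : Finset M) (Z : Set M) :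
    D.drel (X ∪ X') Z = D.drel X (Z ∪ ↑X') + D.drel X' Z := by
  classical
  apply le_antisymm
  · obtain ⟨Y₁, hY₁, e₁⟩ := D.drel_witness X (Z ∪ ↑X')
    obtain ⟨Y₂, hY₂, e₂⟩ := D.drel_witness X' Z
    set W := Y₂ ∪ Y₁.filter (fun y => y ∈ Z) with hW
    have hWZ : ↑W ⊆ Z := by
      intro y hy
      simp only [hW, Finset.coe_union, Set.mem_union, Finset.coe_filter, Set.mem_setOf_eq] at hy
      rcases hy with hy | hy
      · exact hY₂ hy
      · exact hy.2
    have hY₁W : Y₁ ⊆ X' ∪ W := by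
      intro y hy
      rcases hY₁ hy with h | h
      · exact Finset.mem_union_right _ (Finset.mem_union_right _ (Finset.mem_filter.2 ⟨hy, h⟩))
      · exact Finset.mem_union_left _ (by exact_mod_cast h)
    have key : D.drel (X ∪ X') Z ≤ D.d (X ∪ X' ∪ W) - D.d W := D.drel_le hWZ
    have split : D.d (X ∪ X' ∪ W) - D.d W
        = (D.d (X ∪ (X' ∪ W)) - D.d (X' ∪ W)) + (D.d (X' ∪ W) - D.d W) := by
      rw [Finset.union_assoc]; ring
    have b1 : D.d (X ∪ (X' ∪ W)) - D.d (X' ∪ W) ≤ D.d (X ∪ Y₁) - D.d Y₁ := D.f_anti X hY₁W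
    have b2 : D.d (X' ∪ W) - D.d W ≤ D.d (X' ∪ Y₂) - D.d Y₂ :=
      D.f_anti X' (Finset.subset_union_left)
    omega
  · refine le_csInf (D.wset_nonempty _ Z) ?_
    rintro k ⟨Y, hY, rfl⟩
    have h1 : D.drel X (Z ∪ ↑X') ≤ D.d (X ∪ (X' ∪ Y)) - D.d (X' ∪ Y) := by
      refine D.drel_le ?_
      rw [Finset.coe_union]
      exact Set.union_subset (Set.subset_union_right) (hY.trans Set.subset_union_left)
    have h2 : D.drel X' Z ≤ D.d (X' ∪ Y) - D.d Y := D.drel_le hY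
    have : X ∪ X' ∪ Y = X ∪ (X' ∪ Y) := Finset.union_assoc _ _ _
    rw [this]
    omega


lemma mem_cld {a : M} {Z : Set M} : a ∈ D.cld Z ↔ D.drel {a} Z = 0 := Iff.rfl

lemma subset_cld (Z : Set M) : Z ⊆ D.cld Z := by
  intro a ha
  have h1 : D.drel {a} Z ≤ D.d ({a} ∪ {a}) - D.d {a} := D.drel_le (by simpa using ha)
  simp only [Finset.union_idempotent, sub_self] at h1
  exact le_antisymm (by simpa using h1) (D.drel_nonneg _ _)

lemma cld_mono {Z Z' : Set M} (h : Z ⊆ Z') : D.cld Z ⊆ D.cld Z' := by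
  intro a ha
  exact le_antisymm ((D.drel_anti _ h).trans_eq ha) (D.drel_nonneg _ _)

/-- A finset all of whose elements lie in `cld Z` has `drel = 0` over `Z`. -/
lemma drel_eq_zero_of_subset_cld {T : Finset M} {Z : Set M} (h : ↑T ⊆ D.cld Z) :
    D.drel T Z = 0 := by
  classical
  induction T using Finset.induction_on with
  | empty =>
      have h1 : D.drel ∅ Z ≤ D.d (∅ ∪ ∅) - D.d ∅ := D.drel_le (by simp)
      simp only [Finset.union_idempotent, sub_self] at h1
      exact le_antisymm (by simpa using h1) (D.drel_nonneg _ _)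
  | @insert t T ht ih =>
      have hT : ↑T ⊆ D.cld Z := by
        refine Set.Subset.trans ?_ h
        exact_mod_cast Finset.subset_insert t T
      have htZ : D.drel {t} Z = 0 := h (by simp)
      have hins : insert t T = {t} ∪ T := rfl
      rw [hins, D.drel_union {t} T Z, ih hT, add_zero]
      have h1 : D.drel {t} (Z ∪ ↑T) ≤ D.drel {t} Z := D.drel_anti _ Set.subset_union_left
      exact le_antisymm (htZ ▸ h1) (D.drel_nonneg _ _)

lemma drel_union_cld {X T : Finset M} {Z : Set M} (h : ↑T ⊆ D.cld Z) :
    D.drel X (Z ∪ ↑T) = D.drel X Z := by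
  have hTZ : D.drel T Z = 0 := D.drel_eq_zero_of_subset_cld h
  have hTZX : D.drel T (Z ∪ ↑X) = 0 := by
    refine le_antisymm ?_ (D.drel_nonneg _ _)
    calc D.drel T (Z ∪ ↑X) ≤ D.drel T Z := D.drel_anti _ Set.subset_union_left
    _ = 0 := hTZ
  have h1 := D.drel_union X T Z
  have h2 := D.drel_union T X Z
  rw [Finset.union_comm] at h2
  omega

lemma cld_union_eq_of_subset_cld {Z T : Set M} (h : T ⊆ D.cld Z) :
    D.cld (Z ∪ T) = D.cld Z := by
  classical
  apply Set.Subset.antisymm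
  · intro a ha
    obtain ⟨Y, hY, e⟩ := D.drel_witness {a} (Z ∪ T)
    set YT := Y.filter (fun y => y ∈ T) with hYT
    have hYsub : ↑Y ⊆ Z ∪ ↑YT := by
      intro y hy
      rcases hY hy with hz | ht
      · exact Or.inl hz
      · exact Or.inr (by
          simp only [hYT, Finset.coe_filter, Set.mem_setOf_eq]
          exact ⟨by exact_mod_cast hy, ht⟩)
    have hYTcld : ↑YT ⊆ D.cld Z := by
      intro y hy
      simp only [hYT, Finset.coe_filter, Set.mem_setOf_eq] at hy
      exact h hy.2
    have h1 : D.drel {a} (Z ∪ ↑YT) ≤ D.d ({a} ∪ Y) - D.d Y := D.drel_le hYsub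
    have h2 : D.drel {a} (Z ∪ ↑YT) = D.drel {a} Z := D.drel_union_cld hYTcld
    have h0 := D.drel_nonneg {a} Z
    have ha0 : D.drel {a} (Z ∪ T) = 0 := ha
    rw [mem_cld]
    omega
  · exact D.cld_mono Set.subset_union_left

lemma cld_idem (Z : Set M) : D.cld (D.cld Z) = D.cld Z := by
  have h1 : D.cld (Z ∪ D.cld Z) = D.cld Z :=
    D.cld_union_eq_of_subset_cld (le_refl _)
  have h2 : Z ∪ D.cld Z = D.cld Z := Set.union_eq_self_of_subset_left (D.subset_cld Z)
  calc D.cld (D.cld Z) = D.cld (Z ∪ D.cld Z) := by rw [h2]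
  _ = D.cld Z := h1

lemma cld_subset_of_subset_cld {W V : Set M} (h : W ⊆ D.cld V) : D.cld W ⊆ D.cld V := by
  have := D.cld_mono h
  rwa [D.cld_idem] at this

lemma cld_cld_union (Z W : Set M) : D.cld (D.cld Z ∪ W) = D.cld (Z ∪ W) := by
  apply Set.Subset.antisymm
  · refine D.cld_subset_of_subset_cld (Set.union_subset ?_ ?_)
    · exact D.cld_mono Set.subset_union_left
    · intro x hx
      exact D.subset_cld _ (Or.inr hx)
  · exact D.cld_mono (Set.union_subset_union_left W (D.subset_cld Z))


lemma drel_smul (g : G) (X : Finset M) (Z : Set M) :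
    D.drel (X.image (fun x => g • x)) ((fun x => g • x) '' Z) = D.drel X Z := by
  unfold drel
  congr 1
  ext k
  simp only [Set.mem_setOf_eq]
  constructor
  · rintro ⟨Y, hY, rfl⟩
    refine ⟨Y.image (fun x => g⁻¹ • x), ?_, ?_⟩
    · intro y hy
      simp only [Finset.coe_image, Set.mem_image] at hy
      obtain ⟨y', hy', rfl⟩ := hy
      obtain ⟨z, hz, hzy⟩ := hY hy'
      rw [← hzy, inv_smul_smul]; exact hz
    · have himg : (Y.image (fun x => g⁻¹ • x)).image (fun x => g • x) = Y := by
        rw [Finset.image_image]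
        have : ((fun x => g • x) ∘ fun x : M => g⁻¹ • x) = id := by
          funext x; simp
        rw [this, Finset.image_id]
      have e1 : D.d (X ∪ Y.image (fun x => g⁻¹ • x))
          = D.d (X.image (fun x => g • x) ∪ Y) := by
        conv_rhs => rw [← himg]
        rw [← Finset.image_union, D.invariant]
      have e2 : D.d (Y.image (fun x => g⁻¹ • x)) = D.d Y := by
        conv_rhs => rw [← himg, D.invariant]
      rw [e1, e2]
  · rintro ⟨Y, hY, rfl⟩
    refine ⟨Y.image (fun x => g • x), ?_, ?_⟩
    · intro y hy
      simp only [Finset.coe_image, Set.mem_image] at hy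
      obtain ⟨y', hy', rfl⟩ := hy
      exact ⟨y', hY hy', rfl⟩
    · rw [← Finset.image_union, D.invariant, D.invariant]

lemma drel_smul_singleton (g : G) (a : M) (Z : Set M) :
    D.drel {g • a} ((fun x => g • x) '' Z) = D.drel {a} Z := by
  have := D.drel_smul g {a} Z
  rwa [Finset.image_singleton] at this

lemma mem_cld_smul {g : G} {a : M} {Z : Set M} :
    g • a ∈ D.cld ((fun x => g • x) '' Z) ↔ a ∈ D.cld Z := by
  rw [mem_cld, mem_cld, D.drel_smul_singleton]

lemma cld_smul (g : G) (Z : Set M) :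
    D.cld ((fun x => g • x) '' Z) = (fun x => g • x) '' (D.cld Z) := by
  ext a
  constructor
  · intro ha
    refine ⟨g⁻¹ • a, ?_, by simp⟩
    rw [← D.mem_cld_smul (g := g)]
    simpa using ha
  · rintro ⟨b, hb, rfl⟩
    exact D.mem_cld_smul.2 hb

lemma fixes_inv {g : G} {A : Set M} (h : Fixes G g A) : Fixes G g⁻¹ A := by
  intro a ha
  have := h a ha
  calc g⁻¹ • a = g⁻¹ • (g • a) := by rw [this]
  _ = a := by simp

lemma fixes_mul {g h : G} {A : Set M} (hg : Fixes G g A) (hh : Fixes G h A) :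
    Fixes G (g * h) A := by
  intro a ha
  rw [mul_smul, hh a ha, hg a ha]

lemma fixes_mono {g : G} {A A' : Set M} (h : A' ⊆ A) (hg : Fixes G g A) : Fixes G g A' :=
  fun a ha => hg a (h ha)

lemma fixes_image_eq {g : G} {A : Set M} (h : Fixes G g A) :
    (fun x => g • x) '' A = A := by
  ext a
  constructor
  · rintro ⟨b, hb, rfl⟩
    simpa [h b hb] using hb
  · intro ha
    exact ⟨a, ha, h a ha⟩

lemma orb_smul_mem {h : G} {b b' : M} {C : Set M} (hh : Fixes G h C)
    (hb' : b' ∈ orbOver G b C) : h • b' ∈ orbOver G b C := by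
  obtain ⟨k, hk, rfl⟩ := hb'
  exact ⟨h * k, fixes_mul hh hk, by rw [mul_smul]⟩

lemma drel_orb {b b' : M} {C : Set M} (hb' : b' ∈ orbOver G b C) :
    D.drel {b'} C = D.drel {b} C := by
  obtain ⟨k, hk, rfl⟩ := hb'
  calc D.drel {k • b} C = D.drel {k • b} ((fun x => k • x) '' C) := by
        rw [fixes_image_eq hk]
  _ = D.drel {b} C := D.drel_smul_singleton k b C

lemma isClX_cld_eq {A : Set M} (hA : D.IsClX A) : D.cld A = A := by
  obtain ⟨F, rfl⟩ := hA
  exact D.cld_idem _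

lemma isClX_smul (g : G) {A : Set M} (hA : D.IsClX A) :
    D.IsClX ((fun x => g • x) '' A) := by
  obtain ⟨F, rfl⟩ := hA
  refine ⟨F.image (fun x => g • x), ?_⟩
  rw [Finset.coe_image, ← D.cld_smul]

lemma mem_isClX_iff {A : Set M} (hA : D.IsClX A) {a : M} :
    a ∈ A ↔ D.drel {a} A = 0 := by
  conv_lhs => rw [← D.isClX_cld_eq hA]
  exact Iff.rfl

lemma isBasic_orb {b b' : M} {C : Set M} (hC : D.IsClX C) (hb : D.IsBasic b C)
    (hb' : b' ∈ orbOver G b C) : D.IsBasic b' C := by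
  obtain ⟨k, hk, rfl⟩ := hb'
  constructor
  · intro hmem
    exact hb.1 (by
      have : (k : G)⁻¹ • (k • b) = k • b := fixes_inv hk _ hmem
      rw [inv_smul_smul] at this
      rw [this]; exact hmem)
  · intro C'' hC'' hCC'' hlt
    have hC''' : D.IsClX ((fun x => (k : G)⁻¹ • x) '' C'') := D.isClX_smul _ hC''
    have himg : (fun x => k • x) '' ((fun x => (k : G)⁻¹ • x) '' C'') = C'' := by
      rw [← Set.image_comp]
      have : ((fun x : M => k • x) ∘ fun x => (k : G)⁻¹ • x) = id := by
        funext x; simp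
      rw [this, Set.image_id]
    have hsub : C ⊆ (fun x => (k : G)⁻¹ • x) '' C'' := by
      intro c hc
      exact ⟨c, hCC'' hc, fixes_inv hk c hc⟩
    have hinv1 : D.drel {k • b} C'' = D.drel {b} ((fun x => (k : G)⁻¹ • x) '' C'') := by
      conv_lhs => rw [← himg]
      exact D.drel_smul_singleton k b _
    have horb : D.drel {k • b} C = D.drel {b} C := D.drel_orb ⟨k, hk, rfl⟩
    have := hb.2 _ hC''' hsub (by rw [← hinv1]; omega)
    obtain ⟨c, hc, hcb⟩ := this
    have : k • ((k : G)⁻¹ • c) = k • b := by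
      show k • ((fun x => (k : G)⁻¹ • x) c) = k • b
      rw [hcb]
    rw [smul_inv_smul] at this
    rw [← this]; exact hc

lemma isBasic_ext {b : M} {C C' : Set M} (hb : D.IsBasic b C) (hC' : D.IsClX C')
    (hCC' : C ⊆ C') (hbC' : b ∉ C') : D.drel {b} C' = D.drel {b} C := by
  by_contra hne
  have hle : D.drel {b} C' ≤ D.drel {b} C := D.drel_anti _ hCC'
  exact hbC' (hb.2 C' hC' hCC' (lt_of_le_of_ne hle hne))

lemma cld_union_cld_right (Z W : Set M) : D.cld (Z ∪ D.cld W) = D.cld (Z ∪ W) := by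
  rw [Set.union_comm Z, D.cld_cld_union, Set.union_comm]

lemma isClX_cld_union {A B : Set M} (hA : D.IsClX A) (hB : D.IsClX B) :
    D.IsClX (D.cld (A ∪ B)) := by
  obtain ⟨F, rfl⟩ := hA
  obtain ⟨F₂, rfl⟩ := hB
  refine ⟨F ∪ F₂, ?_⟩
  rw [D.cld_cld_union, D.cld_union_cld_right, Finset.coe_union]

/-- The key exchange step, using basicness of orbit elements. -/
lemma exch (g : G) {b : M} {C : Set M} (hC : D.IsClX C) (hb : D.IsBasic b C)
    (hbd : ∀ b' ∈ orbOver G b C, b' ∈ D.cld (C ∪ {g • b'})) :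
    ∀ e ∈ orbOver G b C,
      g • e ∈ D.cld (D.cld (C ∪ (fun x => g • x) '' C)
        ∪ (fun x => g • x) '' D.cld (C ∪ (fun x => g • x) '' C) ∪ {e}) := by
  intro e he
  set C₁ := D.cld (C ∪ (fun x => g • x) '' C) with hC₁def
  have hC₁X : D.IsClX C₁ := D.isClX_cld_union hC (D.isClX_smul g hC)
  have hCC₁ : C ⊆ C₁ := Set.Subset.trans Set.subset_union_left (D.subset_cld _)
  have hbe : D.IsBasic e C := D.isBasic_orb hC hb he
  by_cases he₁ : e ∈ C₁
  · exact D.subset_cld _ (Or.inl (Or.inr ⟨e, he₁, rfl⟩))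
  by_cases hge : g • e ∈ C₁
  · exact D.subset_cld _ (Or.inl (Or.inl hge))
  -- main case
  set Cg := (fun x => g⁻¹ • x) '' C₁ with hCgdef
  have hCgX : D.IsClX Cg := D.isClX_smul g⁻¹ hC₁X
  have hCCg : C ⊆ Cg := by
    intro c hc
    refine ⟨g • c, ?_, by simp⟩
    exact D.subset_cld _ (Or.inr ⟨c, hc, rfl⟩)
  have heCg : e ∉ Cg := by
    rintro ⟨c, hc, hce⟩
    apply hge
    have hgec : g • e = c := by rw [← hce]; simp
    rw [hgec]; exact hc
  have m1 : D.drel {e} C₁ = D.drel {e} C := D.isBasic_ext hbe hC₁X hCC₁ he₁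
  have m2 : D.drel {e} Cg = D.drel {e} C := D.isBasic_ext hbe hCgX hCCg heCg
  have m3 : D.drel {g • e} C₁ = D.drel {e} Cg := by
    have himg : (fun x => g • x) '' Cg = C₁ := by
      rw [hCgdef, ← Set.image_comp]
      have : ((fun x : M => g • x) ∘ fun x => g⁻¹ • x) = id := by
        funext z; simp
      rw [this, Set.image_id]
    conv_lhs => rw [← himg]
    exact D.drel_smul_singleton g e Cg
  have z0 : D.drel {e} (C₁ ∪ {g • e}) = 0 := by
    refine le_antisymm ?_ (D.drel_nonneg _ _)
    have hsc : C ∪ {g • e} ⊆ C₁ ∪ {g • e} := Set.union_subset_union_left _ hCC₁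
    have hb0 : D.drel {e} (C ∪ {g • e}) = 0 := hbd e he
    have := D.drel_anti (X := {e}) hsc
    omega
  have A1 := D.drel_union {e} {g • e} C₁
  have A2 := D.drel_union {g • e} {e} C₁
  rw [Finset.union_comm] at A2
  rw [Finset.coe_singleton] at A1 A2
  have hfin : D.drel {g • e} (C₁ ∪ {e}) = 0 := by omega
  have : g • e ∈ D.cld (C₁ ∪ {e}) := hfin
  refine D.cld_mono ?_ this
  intro z hz
  rcases hz with hz | hz
  · exact Or.inl (Or.inl hz)
  · exact Or.inr hz

/-- Main step: `u • x ∈ B'` for all `x ∈ B'`. -/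
lemma main_step (hex : D.ExistenceP) {u : G} {B₀ S C E₂ : Set M} {b : M}
    (hS : D.cld (B₀ ∪ S) = Set.univ) (horb : S = orbOver G b C)
    (hE₂ : ∀ e ∈ S, u • e ∈ D.cld (E₂ ∪ {e}))
    {B' : Set M} (hB' : D.IsClX B') (hB₀B' : B₀ ⊆ B')
    (huB₀ : (fun x => u • x) '' B₀ ⊆ B')
    (hE₂B' : E₂ ⊆ B') (hCB' : C ⊆ B') :
    ∀ x ∈ B', u • x ∈ B' := by
  classical
  obtain ⟨F', hF'⟩ := id hB'
  intro x hx
  have hxu : D.drel {x} (B₀ ∪ S) = 0 := by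
    have : x ∈ D.cld (B₀ ∪ S) := by rw [hS]; trivial
    exact this
  obtain ⟨Y, hY, hYe⟩ := D.drel_witness {x} (B₀ ∪ S)
  set YS := Y.filter (fun y => y ∈ S) with hYSdef
  have hYsub : ↑Y ⊆ B₀ ∪ ↑YS := by
    intro y hy
    rcases hY hy with hz | ht
    · exact Or.inl hz
    · refine Or.inr ?_
      simp only [hYSdef, Finset.coe_filter, Set.mem_setOf_eq]
      exact ⟨by exact_mod_cast hy, ht⟩
  have hYSS : ↑YS ⊆ S := by
    intro y hy
    simp only [hYSdef, Finset.coe_filter, Set.mem_setOf_eq] at hy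
    exact hy.2
  have h1 : D.drel {x} (B₀ ∪ ↑YS) = 0 := by
    refine le_antisymm ?_ (D.drel_nonneg _ _)
    have := D.drel_le (X := {x}) hYsub
    omega
  set C₀ := D.cld ↑(insert (u • x) F') with hC₀def
  have hC₀X : D.IsClX C₀ := ⟨_, rfl⟩
  obtain ⟨h, hfix, hindep⟩ := hex (D.cld ↑YS) B' C₀ ⟨_, rfl⟩ hB' hC₀X
  set eb := YS.image (fun y => h • y) with hebdef
  have hfixC : Fixes G h C := fixes_mono hCB' hfix
  have hebS : ↑eb ⊆ S := by
    intro y hy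
    simp only [hebdef, Finset.coe_image, Set.mem_image] at hy
    obtain ⟨y', hy', rfl⟩ := hy
    rw [horb]
    exact orb_smul_mem hfixC (by rw [← horb]; exact hYSS (by exact_mod_cast hy'))
  have himg : (fun y => h • y) '' (B₀ ∪ ↑YS) = B₀ ∪ ↑eb := by
    rw [Set.image_union, fixes_image_eq (fixes_mono hB₀B' hfix)]
    congr 1
    rw [hebdef, Finset.coe_image]
  have hx2 : D.drel {x} (B₀ ∪ ↑eb) = 0 := by
    have := D.drel_smul_singleton h x (B₀ ∪ ↑YS)
    rw [himg, hfix x hx] at this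
    rw [this]; exact h1
  have hux : u • x ∈ D.cld (B' ∪ ↑eb) := by
    have hxc : x ∈ D.cld (B₀ ∪ ↑eb) := hx2
    have huxc : u • x ∈ D.cld ((fun y => u • y) '' (B₀ ∪ ↑eb)) := by
      rw [D.cld_smul]
      exact ⟨x, hxc, rfl⟩
    refine D.cld_subset_of_subset_cld ?_ huxc
    rw [Set.image_union]
    refine Set.union_subset ?_ ?_
    · exact huB₀.trans ((Set.subset_union_left).trans (D.subset_cld _))
    · rintro _ ⟨e, he, rfl⟩
      have := hE₂ e (hebS he)
      refine D.cld_mono ?_ this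
      refine Set.union_subset_union hE₂B' ?_
      intro z hz
      rw [hz]
      exact he
  have hind : D.drel eb (B' ∪ {u • x}) = D.drel eb B' := by
    have himg2 : (fun y => h • y) '' (D.cld ↑YS) = D.cld ↑eb := by
      rw [← D.cld_smul, hebdef, Finset.coe_image]
    have hIF : D.IndepF eb B' C₀ := by
      apply hindep
      rw [himg2]
      exact D.subset_cld _
    have hux₀ : (u • x) ∈ C₀ := D.subset_cld _ (by simp)
    have ha1 : D.drel eb (B' ∪ C₀) ≤ D.drel eb (B' ∪ {u • x}) :=
      D.drel_anti _ (Set.union_subset_union_right _ (by intro z hz; rw [hz]; exact hux₀))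
    have ha2 : D.drel eb (B' ∪ {u • x}) ≤ D.drel eb B' :=
      D.drel_anti _ Set.subset_union_left
    have := hIF
    unfold IndepF at this
    omega
  -- additivity
  have A1 := D.drel_union {u • x} eb B'
  have A2 := D.drel_union eb {u • x} B'
  rw [Finset.union_comm] at A2
  have hz1 : D.drel {u • x} (B' ∪ ↑eb) = 0 := hux
  have hz2 : D.drel eb (B' ∪ ↑({u • x} : Finset M)) = D.drel eb B' := by
    rw [Finset.coe_singleton]; exact hind
  have hfin : D.drel {u • x} B' = 0 := by omega
  have : u • x ∈ D.cld B' := hfin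
  rwa [D.isClX_cld_eq hB'] at this

end DimFn

/-- Suppose `⫝^d` is a stationary independence relation
compatible with `cl^d` on `M`, `M` is monodimensional, and `g ∈ Aut(M)` is
bounded. Then there exists `E ∈ 𝒳` such that `g(B) = B` (setwise) for every
`B ∈ 𝒳` containing `E`. -/
theorem bounded_stabilizes {M G : Type*} [Countable M] [DecidableEq M]
    [Group G] [MulAction G M] (D : DimFn M G)
    (hdcl : D.SubsumesDcl) (hex : D.ExistenceP) (hinv : D.InvarianceP)
    (hmono : D.MonotonicityP) (htrans : D.TransitivityP) (hsym : D.SymmetryP)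
    (hcompat : D.CompatibilityP) (hstat : D.StationarityP)
    (hmonodim : D.Monodimensional)
    (g : G) (hg : D.Bounded g) :
    ∃ E : Set M, D.IsClX E ∧
      ∀ B : Set M, D.IsClX B → E ⊆ B → (fun x => g • x) '' B = B := by
  classical
  obtain ⟨A, hAX, C, hCX, hAC, b, hbBasic, hbd⟩ := hg
  set S := orbOver G b C with hSdef
  obtain ⟨B, hBX, hCB, hBS⟩ := hmonodim C S hCX ⟨b, hbBasic, rfl⟩
  obtain ⟨FB, hFB⟩ := id hBX
  obtain ⟨FC, hFC⟩ := id hCX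
  set Efin : Finset M := FB ∪ FB.image (fun x => g • x) ∪ FB.image (fun x => g⁻¹ • x)
      ∪ FC ∪ FC.image (fun x => g • x) ∪ FC.image (fun x => g⁻¹ • x)
      ∪ FC.image (fun x => (g * g) • x) with hEfin
  refine ⟨D.cld ↑Efin, ⟨Efin, rfl⟩, ?_⟩
  intro B' hB'X hEB'
  -- generic inclusion helper
  have hsub : ∀ F : Finset M, F ⊆ Efin → D.cld ↑F ⊆ B' := by
    intro F hF
    refine Set.Subset.trans ?_ hEB'
    exact D.cld_mono (by exact_mod_cast hF)
  have hFBE : FB ⊆ Efin := by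
    intro z hz; simp only [hEfin, Finset.mem_union]; tauto
  have hgFBE : FB.image (fun x => g • x) ⊆ Efin := by
    intro z hz; simp only [hEfin, Finset.mem_union]; tauto
  have hgiFBE : FB.image (fun x => g⁻¹ • x) ⊆ Efin := by
    intro z hz; simp only [hEfin, Finset.mem_union]; tauto
  have hFCE : FC ⊆ Efin := by
    intro z hz; simp only [hEfin, Finset.mem_union]; tauto
  have hgFCE : FC.image (fun x => g • x) ⊆ Efin := by
    intro z hz; simp only [hEfin, Finset.mem_union]; tauto
  have hgiFCE : FC.image (fun x => g⁻¹ • x) ⊆ Efin := by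
    intro z hz; simp only [hEfin, Finset.mem_union]; tauto
  have hggFCE : FC.image (fun x => (g * g) • x) ⊆ Efin := by
    intro z hz; simp only [hEfin, Finset.mem_union]; tauto
  -- image of an X-set under u is the closure of the image finset
  have himgcld : ∀ (u : G) (F : Finset M),
      (fun x => u • x) '' (D.cld ↑F) = D.cld ↑(F.image (fun x => u • x)) := by
    intro u F
    rw [Finset.coe_image, ← D.cld_smul]
  have hBB' : B ⊆ B' := by rw [hFB]; exact hsub FB hFBE
  have hCB' : C ⊆ B' := hCB.trans hBB'
  have hgB : (fun x => g • x) '' B ⊆ B' := by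
    rw [hFB, himgcld]; exact hsub _ hgFBE
  have hgiB : (fun x => g⁻¹ • x) '' B ⊆ B' := by
    rw [hFB, himgcld]; exact hsub _ hgiFBE
  have hgiC : (fun x => g⁻¹ • x) '' C ⊆ B' := by
    rw [hFC, himgcld]; exact hsub _ hgiFCE
  -- C₁ and its image
  have hC1 : D.cld (C ∪ (fun x => g • x) '' C) ⊆ B' := by
    rw [hFC, himgcld, D.cld_cld_union, D.cld_union_cld_right, ← Finset.coe_union]
    exact hsub _ (Finset.union_subset hFCE hgFCE)
  have hgC1 : (fun x => g • x) '' D.cld (C ∪ (fun x => g • x) '' C) ⊆ B' := by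
    rw [hFC, himgcld, D.cld_cld_union, D.cld_union_cld_right, ← Finset.coe_union,
      himgcld]
    have himgs : (FC ∪ FC.image (fun x => g • x)).image (fun x => g • x)
        = FC.image (fun x => g • x) ∪ FC.image (fun x => (g * g) • x) := by
      rw [Finset.image_union, Finset.image_image]
      congr 1
      apply Finset.image_congr
      intro z _
      simp [mul_smul]
    rw [himgs]
    exact hsub _ (Finset.union_subset hgFCE hggFCE)
  -- forward direction
  have hfwd : ∀ x ∈ B', g • x ∈ B' := by
    refine D.main_step hex hBS rfl (D.exch g hCX hbBasic hbd) hB'X hBB' hgB ?_ hCB'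
    exact Set.union_subset hC1 hgC1
  -- backward direction
  have hbwd : ∀ x ∈ B', g⁻¹ • x ∈ B' := by
    refine D.main_step hex hBS rfl ?_ hB'X hBB' hgiB hgiC hCB'
    intro e he
    have h1 : e ∈ D.cld (C ∪ {g • e}) := hbd e he
    have h2 : g⁻¹ • e ∈ (fun x => g⁻¹ • x) '' D.cld (C ∪ {g • e}) := ⟨e, h1, rfl⟩
    rw [← D.cld_smul, Set.image_union, Set.image_singleton, inv_smul_smul] at h2
    exact h2
  -- conclude
  apply Set.Subset.antisymm
  · rintro _ ⟨x, hx, rfl⟩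
    exact hfwd x hx
  · intro x hx
    exact ⟨g⁻¹ • x, hbwd x hx, by simp⟩
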